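/- Cross-domain cross-policy bound (corrected term (a) of the offline bound): for two transition kernels P_src, P_tar and two policies π_D, π on the same finite state and action spaces (same reward, discount, and initial distribution), J[P_tar](π) − J[P_src](π_D) ≥ −(2·r_max/(1−γ)²) · Σ_s ν[P_src,π_D](s) · D_TV( π_D(s), π(s) ) − (2γ·r_max/(1−γ)²) · Σ_{(s,a)} ρ[P_src,π_D](s,a) · D_TV( P_src(s,a), P_tar(s,a) ). -/

import Mathlib

open Real

noncomputable section

variable {S A : Type*} [Fintype S] [Fintype A]

/-- Time-`t` state-action distribution `d_t[P,pol]` started from the initial state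
distribution `ρ0`:  `d_0(s,a) = ρ0(s)·pol(s)(a)` and
`d_{t+1}(s',a') = Σ_{(s,a)} d_t(s,a)·P(s,a)(s')·pol(s')(a')`. -/
def dDist (P : S → A → PMF S) (pol : S → PMF A) (ρ0 : PMF S) : ℕ → S × A → ℝ
  | 0 => fun p => (ρ0 p.1).toReal * (pol p.1 p.2).toReal
  | (t + 1) => fun p' =>
      ∑ p : S × A, dDist P pol ρ0 t p * (P p.1 p.2 p'.1).toReal * (pol p'.1 p'.2).toReal

/-- Normalized state-action occupancy `ρ[P,pol](s,a) = (1−γ)·Σ_t γ^t·d_t[P,pol](s,a)`. -/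
def occ (P : S → A → PMF S) (pol : S → PMF A) (ρ0 : PMF S) (γ : ℝ) (p : S × A) : ℝ :=
  (1 - γ) * ∑' t : ℕ, γ ^ t * dDist P pol ρ0 t p

/-- Normalized state occupancy `ν[P,pol](s) = Σ_a ρ[P,pol](s,a)`. -/
def stateOcc (P : S → A → PMF S) (pol : S → PMF A) (ρ0 : PMF S) (γ : ℝ) (s : S) : ℝ :=
  ∑ a : A, occ P pol ρ0 γ (s, a)

/-- Expected discounted return `J[P](pol) = Σ_t γ^t Σ_{(s,a)} d_t[P,pol](s,a)·r(s,a)`. -/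
def Jret (P : S → A → PMF S) (pol : S → PMF A) (ρ0 : PMF S) (r : S → A → ℝ) (γ : ℝ) : ℝ :=
  ∑' t : ℕ, γ ^ t * ∑ p : S × A, dDist P pol ρ0 t p * r p.1 p.2

/-- Value function `V[P,pol](s)`: the return with the recursion started from the point
distribution at `s` (i.e. `d_0(s',a) = 1[s'=s]·pol(s')(a)`). -/
def Vval (P : S → A → PMF S) (pol : S → PMF A) (r : S → A → ℝ) (γ : ℝ) (s : S) : ℝ :=
  Jret P pol (PMF.pure s) r γ

/-- Action-value function `Q[P,pol](s,a) = r(s,a) + γ·Σ_{s'} P(s,a)(s')·V[P,pol](s')`. -/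
def Qval (P : S → A → PMF S) (pol : S → PMF A) (r : S → A → ℝ) (γ : ℝ) (s : S) (a : A) : ℝ :=
  r s a + γ * ∑ s' : S, (P s a s').toReal * Vval P pol r γ s'

/-- Total variation distance between two pmfs on a finite type:
`D_TV(p,q) = (1/2)·Σ_x |p(x) − q(x)|`. -/
def dTV {X : Type*} [Fintype X] (p q : PMF X) : ℝ :=
  (1 / 2) * ∑ x : X, |(p x).toReal - (q x).toReal|

/-- Kullback–Leibler divergence between two pmfs on a finite type (with `q` everywhere
positive): `D_KL(p‖q) = Σ_x p(x)·log(p(x)/q(x))`, with the convention `0·log 0 = 0`. -/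
def dKL {X : Type*} [Fintype X] (p q : PMF X) : ℝ :=
  ∑ x : X, (p x).toReal * Real.log ((p x).toReal / (q x).toReal)

/-- Shannon entropy of a pmf on a finite type, `H(p) = −Σ_x p(x)·log p(x)`,
with the convention `0·log 0 = 0`. -/
def entropyPMF {X : Type*} [Fintype X] (p : PMF X) : ℝ :=
  - ∑ x : X, (p x).toReal * Real.log (p x).toReal

lemma pmf_sum_toReal {X : Type*} [Fintype X] (p : PMF X) : ∑ x, (p x).toReal = 1 := by
  rw [← ENNReal.toReal_sum (fun x _ => (PMF.apply_ne_top p x)), ← tsum_fintype (L := SummationFilter.unconditional _), p.tsum_coe,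
    ENNReal.toReal_one]

lemma dTV_nonneg {X : Type*} [Fintype X] (p q : PMF X) : 0 ≤ dTV p q := by
  have : (0:ℝ) ≤ ∑ x : X, |(p x).toReal - (q x).toReal| :=
    Finset.sum_nonneg fun x _ => abs_nonneg _
  unfold dTV; linarith

lemma dTV_le_one {X : Type*} [Fintype X] (p q : PMF X) : dTV p q ≤ 1 := by
  unfold dTV
  have h : ∑ x : X, |(p x).toReal - (q x).toReal| ≤
      ∑ x : X, ((p x).toReal + (q x).toReal) := by
    refine Finset.sum_le_sum fun x _ => ?_
    calc |(p x).toReal - (q x).toReal| ≤ |(p x).toReal| + |(q x).toReal| := abs_sub _ _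
      _ = (p x).toReal + (q x).toReal := by
          rw [abs_of_nonneg ENNReal.toReal_nonneg, abs_of_nonneg ENNReal.toReal_nonneg]
  rw [Finset.sum_add_distrib, pmf_sum_toReal, pmf_sum_toReal] at h
  linarith

lemma dDist_nonneg (P : S → A → PMF S) (pol : S → PMF A) (ρ0 : PMF S) (t : ℕ) (p : S × A) :
    0 ≤ dDist P pol ρ0 t p := by
  induction t generalizing p with
  | zero => exact mul_nonneg ENNReal.toReal_nonneg ENNReal.toReal_nonneg
  | succ t ih =>
      exact Finset.sum_nonneg fun q _ => mul_nonneg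
        (mul_nonneg (ih q) ENNReal.toReal_nonneg) ENNReal.toReal_nonneg

lemma dDist_sum_one (P : S → A → PMF S) (pol : S → PMF A) (ρ0 : PMF S) (t : ℕ) :
    ∑ p : S × A, dDist P pol ρ0 t p = 1 := by
  induction t with
  | zero =>
      rw [Fintype.sum_prod_type]
      simp only [dDist]
      simp_rw [← Finset.mul_sum, pmf_sum_toReal, mul_one, pmf_sum_toReal]
  | succ t ih =>
      simp only [dDist]
      rw [Fintype.sum_prod_type]
      rw [Finset.sum_congr rfl (fun (s' : S) _ => Finset.sum_comm (s := Finset.univ)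
        (t := Finset.univ) (f := fun (a' : A) (p : S × A) =>
          dDist P pol ρ0 t p * (P p.1 p.2 s').toReal * (pol s' a').toReal)), Finset.sum_comm]
      simp_rw [← Finset.mul_sum, pmf_sum_toReal, mul_one]
      simp_rw [← Finset.mul_sum, pmf_sum_toReal, mul_one]
      exact ih

lemma marginal_succ (P2 : S → A → PMF S) (π2 : S → PMF A) (ρ0 : PMF S) (t : ℕ) (s' : S) :
    (∑ p : S × A, dDist P2 π2 ρ0 t p * (P2 p.1 p.2 s').toReal)
      = ∑ a : A, dDist P2 π2 ρ0 (t + 1) (s', a) := by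
  simp only [dDist]
  rw [Finset.sum_comm]
  simp_rw [← Finset.mul_sum, pmf_sum_toReal, mul_one]

lemma delta_rec (P1 P2 : S → A → PMF S) (π1 π2 : S → PMF A) (ρ0 : PMF S) (t : ℕ) :
    ∑ q : S × A, |dDist P1 π1 ρ0 (t+1) q - dDist P2 π2 ρ0 (t+1) q| ≤
      (∑ q : S × A, |dDist P1 π1 ρ0 t q - dDist P2 π2 ρ0 t q|)
      + 2 * (∑ p : S × A, dDist P2 π2 ρ0 t p * dTV (P2 p.1 p.2) (P1 p.1 p.2))
      + 2 * (∑ s : S, (∑ a : A, dDist P2 π2 ρ0 (t+1) (s, a)) * dTV (π2 s) (π1 s)) := by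
  have hdec : ∀ q : S × A, dDist P1 π1 ρ0 (t+1) q - dDist P2 π2 ρ0 (t+1) q =
      (∑ p : S × A, (dDist P1 π1 ρ0 t p - dDist P2 π2 ρ0 t p) *
          (P1 p.1 p.2 q.1).toReal * (π1 q.1 q.2).toReal)
      + (∑ p : S × A, dDist P2 π2 ρ0 t p *
          ((P1 p.1 p.2 q.1).toReal - (P2 p.1 p.2 q.1).toReal) * (π1 q.1 q.2).toReal)
      + (∑ p : S × A, dDist P2 π2 ρ0 t p * (P2 p.1 p.2 q.1).toReal) *
          ((π1 q.1 q.2).toReal - (π2 q.1 q.2).toReal) := by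
    intro q
    simp only [dDist]
    rw [← Finset.sum_sub_distrib, Finset.sum_mul, ← Finset.sum_add_distrib,
      ← Finset.sum_add_distrib]
    exact Finset.sum_congr rfl fun p _ => by ring
  have hT1 : ∑ q : S × A, |∑ p : S × A, (dDist P1 π1 ρ0 t p - dDist P2 π2 ρ0 t p) *
        (P1 p.1 p.2 q.1).toReal * (π1 q.1 q.2).toReal|
      ≤ ∑ q : S × A, |dDist P1 π1 ρ0 t q - dDist P2 π2 ρ0 t q| := by
    calc ∑ q : S × A, |∑ p : S × A, (dDist P1 π1 ρ0 t p - dDist P2 π2 ρ0 t p) *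
          (P1 p.1 p.2 q.1).toReal * (π1 q.1 q.2).toReal|
        ≤ ∑ q : S × A, ∑ p : S × A, |dDist P1 π1 ρ0 t p - dDist P2 π2 ρ0 t p| *
          (P1 p.1 p.2 q.1).toReal * (π1 q.1 q.2).toReal := by
          refine Finset.sum_le_sum fun q _ => (Finset.abs_sum_le_sum_abs _ _).trans
            (le_of_eq (Finset.sum_congr rfl fun p _ => ?_))
          rw [abs_mul, abs_mul, abs_of_nonneg (ENNReal.toReal_nonneg),
            abs_of_nonneg (ENNReal.toReal_nonneg)]
      _ = ∑ p : S × A, |dDist P1 π1 ρ0 t p - dDist P2 π2 ρ0 t p| := by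
          rw [Finset.sum_comm]
          refine Finset.sum_congr rfl fun p _ => ?_
          rw [Fintype.sum_prod_type]
          simp_rw [← Finset.mul_sum, pmf_sum_toReal, mul_one]
          simp_rw [← Finset.mul_sum, pmf_sum_toReal, mul_one]
  have hT2 : ∑ q : S × A, |∑ p : S × A, dDist P2 π2 ρ0 t p *
        ((P1 p.1 p.2 q.1).toReal - (P2 p.1 p.2 q.1).toReal) * (π1 q.1 q.2).toReal|
      ≤ 2 * (∑ p : S × A, dDist P2 π2 ρ0 t p * dTV (P2 p.1 p.2) (P1 p.1 p.2)) := by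
    calc ∑ q : S × A, |∑ p : S × A, dDist P2 π2 ρ0 t p *
          ((P1 p.1 p.2 q.1).toReal - (P2 p.1 p.2 q.1).toReal) * (π1 q.1 q.2).toReal|
        ≤ ∑ q : S × A, ∑ p : S × A, dDist P2 π2 ρ0 t p *
          |(P1 p.1 p.2 q.1).toReal - (P2 p.1 p.2 q.1).toReal| * (π1 q.1 q.2).toReal := by
          refine Finset.sum_le_sum fun q _ => (Finset.abs_sum_le_sum_abs _ _).trans
            (le_of_eq (Finset.sum_congr rfl fun p _ => ?_))
          rw [abs_mul, abs_mul, abs_of_nonneg (dDist_nonneg _ _ _ _ _),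
            abs_of_nonneg (ENNReal.toReal_nonneg)]
      _ = ∑ p : S × A, dDist P2 π2 ρ0 t p *
            ∑ s' : S, |(P1 p.1 p.2 s').toReal - (P2 p.1 p.2 s').toReal| := by
          rw [Finset.sum_comm]
          refine Finset.sum_congr rfl fun p _ => ?_
          rw [Fintype.sum_prod_type]
          simp_rw [← Finset.mul_sum, pmf_sum_toReal, mul_one]
          rw [Finset.mul_sum]
      _ = 2 * (∑ p : S × A, dDist P2 π2 ρ0 t p * dTV (P2 p.1 p.2) (P1 p.1 p.2)) := by
          rw [Finset.mul_sum]
          refine Finset.sum_congr rfl fun p _ => ?_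
          unfold dTV
          rw [Finset.sum_congr rfl fun s' _ => abs_sub_comm ((P1 p.1 p.2 s').toReal) _]
          ring
  have hT3 : ∑ q : S × A, |(∑ p : S × A, dDist P2 π2 ρ0 t p * (P2 p.1 p.2 q.1).toReal) *
        ((π1 q.1 q.2).toReal - (π2 q.1 q.2).toReal)|
      = 2 * (∑ s : S, (∑ a : A, dDist P2 π2 ρ0 (t+1) (s, a)) * dTV (π2 s) (π1 s)) := by
    have hmnn : ∀ s' : S, 0 ≤ ∑ p : S × A, dDist P2 π2 ρ0 t p * (P2 p.1 p.2 s').toReal :=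
      fun s' => Finset.sum_nonneg fun p _ =>
        mul_nonneg (dDist_nonneg _ _ _ _ _) ENNReal.toReal_nonneg
    calc ∑ q : S × A, |(∑ p : S × A, dDist P2 π2 ρ0 t p * (P2 p.1 p.2 q.1).toReal) *
          ((π1 q.1 q.2).toReal - (π2 q.1 q.2).toReal)|
        = ∑ q : S × A, (∑ p : S × A, dDist P2 π2 ρ0 t p * (P2 p.1 p.2 q.1).toReal) *
          |(π1 q.1 q.2).toReal - (π2 q.1 q.2).toReal| := by
          refine Finset.sum_congr rfl fun q _ => ?_
          rw [abs_mul, abs_of_nonneg (hmnn q.1)]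
      _ = ∑ s' : S, (∑ p : S × A, dDist P2 π2 ρ0 t p * (P2 p.1 p.2 s').toReal) *
            ∑ a' : A, |(π1 s' a').toReal - (π2 s' a').toReal| := by
          rw [Fintype.sum_prod_type]
          exact Finset.sum_congr rfl fun s' _ => by rw [Finset.mul_sum]
      _ = 2 * (∑ s : S, (∑ a : A, dDist P2 π2 ρ0 (t+1) (s, a)) * dTV (π2 s) (π1 s)) := by
          rw [Finset.mul_sum]
          refine Finset.sum_congr rfl fun s' _ => ?_
          rw [marginal_succ]
          unfold dTV
          rw [Finset.sum_congr rfl fun a' _ => abs_sub_comm ((π1 s' a').toReal) _]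
          ring
  calc ∑ q : S × A, |dDist P1 π1 ρ0 (t+1) q - dDist P2 π2 ρ0 (t+1) q|
      ≤ ∑ q : S × A, (|∑ p : S × A, (dDist P1 π1 ρ0 t p - dDist P2 π2 ρ0 t p) *
          (P1 p.1 p.2 q.1).toReal * (π1 q.1 q.2).toReal|
        + |∑ p : S × A, dDist P2 π2 ρ0 t p *
          ((P1 p.1 p.2 q.1).toReal - (P2 p.1 p.2 q.1).toReal) * (π1 q.1 q.2).toReal|
        + |(∑ p : S × A, dDist P2 π2 ρ0 t p * (P2 p.1 p.2 q.1).toReal) *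
          ((π1 q.1 q.2).toReal - (π2 q.1 q.2).toReal)|) := by
        refine Finset.sum_le_sum fun q _ => ?_
        rw [hdec q]
        exact (abs_add_le _ _).trans (add_le_add_left (abs_add_le _ _) _)
    _ ≤ _ := by
        rw [Finset.sum_add_distrib, Finset.sum_add_distrib]
        exact add_le_add (add_le_add hT1 hT2) hT3.le

lemma delta_zero (P1 P2 : S → A → PMF S) (π1 π2 : S → PMF A) (ρ0 : PMF S) :
    ∑ q : S × A, |dDist P1 π1 ρ0 0 q - dDist P2 π2 ρ0 0 q| =
      2 * ∑ s : S, (∑ a : A, dDist P2 π2 ρ0 0 (s, a)) * dTV (π2 s) (π1 s) := by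
  simp only [dDist]
  rw [Fintype.sum_prod_type, Finset.mul_sum]
  refine Finset.sum_congr rfl fun s _ => ?_
  have h1 : ∑ a : A, |(ρ0 s).toReal * (π1 s a).toReal - (ρ0 s).toReal * (π2 s a).toReal|
      = (ρ0 s).toReal * ∑ a : A, |(π1 s a).toReal - (π2 s a).toReal| := by
    rw [Finset.mul_sum]
    refine Finset.sum_congr rfl fun a _ => ?_
    rw [← mul_sub, abs_mul, abs_of_nonneg (ENNReal.toReal_nonneg)]
  rw [h1, ← Finset.mul_sum, pmf_sum_toReal, mul_one]
  unfold dTV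
  rw [Finset.sum_congr rfl fun a _ => abs_sub_comm ((π1 s a).toReal) ((π2 s a).toReal)]
  ring

lemma dDist_le_one (P : S → A → PMF S) (pol : S → PMF A) (ρ0 : PMF S) (t : ℕ) (p : S × A) :
    dDist P pol ρ0 t p ≤ 1 := by
  have h := dDist_sum_one P pol ρ0 t
  have h2 := Finset.single_le_sum (f := dDist P pol ρ0 t)
    (fun q _ => dDist_nonneg P pol ρ0 t q) (Finset.mem_univ p)
  linarith

lemma dDist_marg_nonneg (P : S → A → PMF S) (pol : S → PMF A) (ρ0 : PMF S) (t : ℕ) (s : S) :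
    0 ≤ ∑ a : A, dDist P pol ρ0 t (s, a) :=
  Finset.sum_nonneg fun a _ => dDist_nonneg P pol ρ0 t (s, a)

lemma dDist_marg_sum_one (P : S → A → PMF S) (pol : S → PMF A) (ρ0 : PMF S) (t : ℕ) :
    ∑ s : S, ∑ a : A, dDist P pol ρ0 t (s, a) = 1 := by
  rw [← Fintype.sum_prod_type]
  exact dDist_sum_one P pol ρ0 t

lemma summable_aux {γ : ℝ} (hγ0 : 0 ≤ γ) (hγ1 : γ < 1) (c : ℝ) {f : ℕ → ℝ}
    (h0 : ∀ t, 0 ≤ f t) (h1 : ∀ t, f t ≤ c) : Summable (fun t => γ ^ t * f t) := by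
  refine Summable.of_nonneg_of_le (fun t => mul_nonneg (pow_nonneg hγ0 t) (h0 t))
    (fun t => mul_le_mul_of_nonneg_left (h1 t) (pow_nonneg hγ0 t))
    (((summable_geometric_of_lt_one hγ0 hγ1)).mul_right c)

lemma summable_aux' {γ : ℝ} (hγ0 : 0 ≤ γ) (hγ1 : γ < 1) (c : ℝ) {f : ℕ → ℝ}
    (h1 : ∀ t, |f t| ≤ c) : Summable (fun t => γ ^ t * f t) := by
  refine Summable.of_abs ?_
  have : ∀ t, |γ ^ t * f t| = γ ^ t * |f t| := fun t => by
    rw [abs_mul, abs_of_nonneg (pow_nonneg hγ0 t)]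
  rw [funext this]
  exact summable_aux hγ0 hγ1 c (fun t => abs_nonneg _) h1

lemma abstract_rec {γ : ℝ} (hγ0 : 0 ≤ γ) (hγ1 : γ < 1) {δ Ap Bp : ℕ → ℝ}
    (hδ0 : ∀ t, 0 ≤ δ t) (hδ2 : ∀ t, δ t ≤ 2)
    (hA0 : ∀ t, 0 ≤ Ap t) (hA1 : ∀ t, Ap t ≤ 1)
    (hB0 : ∀ t, 0 ≤ Bp t) (hB1 : ∀ t, Bp t ≤ 1)
    (hinit : δ 0 ≤ 2 * Ap 0)
    (hrec : ∀ t, δ (t + 1) ≤ δ t + 2 * Bp t + 2 * Ap (t + 1)) :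
    (1 - γ) * ∑' t : ℕ, γ ^ t * δ t ≤
      2 * ∑' t : ℕ, γ ^ t * Ap t + 2 * γ * ∑' t : ℕ, γ ^ t * Bp t := by
  have hsδ := summable_aux hγ0 hγ1 2 hδ0 hδ2
  have hsA := summable_aux hγ0 hγ1 1 hA0 hA1
  have hsB := summable_aux hγ0 hγ1 1 hB0 hB1
  have hsδ' : Summable (fun t => γ ^ (t + 1) * δ (t + 1)) :=
    (summable_nat_add_iff 1).2 hsδ
  have hsA' : Summable (fun t => γ ^ (t + 1) * Ap (t + 1)) :=
    (summable_nat_add_iff 1).2 hsA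
  have hD := Summable.tsum_eq_zero_add hsδ
  have hAe := Summable.tsum_eq_zero_add hsA
  simp only [pow_zero, one_mul] at hD hAe
  have hg : Summable (fun t => γ * (γ ^ t * δ t) + (2 * γ) * (γ ^ t * Bp t)
      + 2 * (γ ^ (t + 1) * Ap (t + 1))) :=
    ((hsδ.mul_left γ).add (hsB.mul_left (2 * γ))).add (hsA'.mul_left 2)
  have hstep : ∑' t : ℕ, γ ^ (t + 1) * δ (t + 1) ≤
      ∑' t : ℕ, (γ * (γ ^ t * δ t) + (2 * γ) * (γ ^ t * Bp t)
        + 2 * (γ ^ (t + 1) * Ap (t + 1))) := by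
    refine Summable.tsum_le_tsum (fun t => ?_) hsδ' hg
    calc γ ^ (t + 1) * δ (t + 1)
        ≤ γ ^ (t + 1) * (δ t + 2 * Bp t + 2 * Ap (t + 1)) :=
          mul_le_mul_of_nonneg_left (hrec t) (pow_nonneg hγ0 _)
      _ = γ * (γ ^ t * δ t) + (2 * γ) * (γ ^ t * Bp t) + 2 * (γ ^ (t + 1) * Ap (t + 1)) := by
          ring
  have hsplit : ∑' t : ℕ, (γ * (γ ^ t * δ t) + (2 * γ) * (γ ^ t * Bp t)
        + 2 * (γ ^ (t + 1) * Ap (t + 1)))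
      = γ * (∑' t : ℕ, γ ^ t * δ t) + (2 * γ) * (∑' t : ℕ, γ ^ t * Bp t)
        + 2 * (∑' t : ℕ, γ ^ (t + 1) * Ap (t + 1)) := by
    rw [Summable.tsum_add ((hsδ.mul_left γ).add (hsB.mul_left (2 * γ))) (hsA'.mul_left 2),
      Summable.tsum_add (hsδ.mul_left γ) (hsB.mul_left (2 * γ)), tsum_mul_left, tsum_mul_left,
      tsum_mul_left]
  rw [hsplit] at hstep
  nlinarith [hstep, hD, hAe, hinit]

lemma dDist_marg_le_one (P : S → A → PMF S) (pol : S → PMF A) (ρ0 : PMF S) (t : ℕ) (s : S) :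
    ∑ a : A, dDist P pol ρ0 t (s, a) ≤ 1 := by
  have h := dDist_marg_sum_one P pol ρ0 t
  have h2 := Finset.single_le_sum (f := fun s : S => ∑ a : A, dDist P pol ρ0 t (s, a))
    (fun q _ => dDist_marg_nonneg P pol ρ0 t q) (Finset.mem_univ s)
  simpa [h] using h2

lemma sum_stateOcc_mul (P : S → A → PMF S) (pol : S → PMF A) (ρ0 : PMF S)
    {γ : ℝ} (hγ0 : 0 ≤ γ) (hγ1 : γ < 1) (f : S → ℝ) :
    ∑ s : S, ((1 - γ) * ∑' t : ℕ, γ ^ t * ∑ a : A, dDist P pol ρ0 t (s, a)) * f s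
      = (1 - γ) * ∑' t : ℕ, γ ^ t * ∑ s : S, (∑ a : A, dDist P pol ρ0 t (s, a)) * f s := by
  have hsn : ∀ s : S, Summable (fun t => (γ ^ t * ∑ a : A, dDist P pol ρ0 t (s, a)) * f s) :=
    fun s => (summable_aux hγ0 hγ1 1 (fun t => dDist_marg_nonneg P pol ρ0 t s)
      (fun t => dDist_marg_le_one P pol ρ0 t s)).mul_right (f s)
  simp_rw [mul_assoc, ← Finset.mul_sum]
  congr 1
  calc ∑ s : S, (∑' t : ℕ, γ ^ t * ∑ a : A, dDist P pol ρ0 t (s, a)) * f s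
      = ∑ s : S, ∑' t : ℕ, (γ ^ t * ∑ a : A, dDist P pol ρ0 t (s, a)) * f s :=
        Finset.sum_congr rfl fun s _ => (tsum_mul_right).symm
    _ = ∑' t : ℕ, ∑ s : S, (γ ^ t * ∑ a : A, dDist P pol ρ0 t (s, a)) * f s :=
        (Summable.tsum_finsetSum (fun s _ => hsn s)).symm
    _ = ∑' t : ℕ, γ ^ t * ∑ s : S, (∑ a : A, dDist P pol ρ0 t (s, a)) * f s := by
        refine tsum_congr fun t => ?_
        rw [Finset.mul_sum]
        exact Finset.sum_congr rfl fun s _ => by ring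

lemma sum_occ_mul (P : S → A → PMF S) (pol : S → PMF A) (ρ0 : PMF S)
    {γ : ℝ} (hγ0 : 0 ≤ γ) (hγ1 : γ < 1) (f : S × A → ℝ) :
    ∑ p : S × A, ((1 - γ) * ∑' t : ℕ, γ ^ t * dDist P pol ρ0 t p) * f p
      = (1 - γ) * ∑' t : ℕ, γ ^ t * ∑ p : S × A, dDist P pol ρ0 t p * f p := by
  have hsn : ∀ p : S × A, Summable (fun t => (γ ^ t * dDist P pol ρ0 t p) * f p) :=
    fun p => (summable_aux hγ0 hγ1 1 (fun t => dDist_nonneg P pol ρ0 t p)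
      (fun t => dDist_le_one P pol ρ0 t p)).mul_right (f p)
  simp_rw [mul_assoc, ← Finset.mul_sum]
  congr 1
  calc ∑ p : S × A, (∑' t : ℕ, γ ^ t * dDist P pol ρ0 t p) * f p
      = ∑ p : S × A, ∑' t : ℕ, (γ ^ t * dDist P pol ρ0 t p) * f p :=
        Finset.sum_congr rfl fun p _ => (tsum_mul_right).symm
    _ = ∑' t : ℕ, ∑ p : S × A, (γ ^ t * dDist P pol ρ0 t p) * f p :=
        (Summable.tsum_finsetSum (fun p _ => hsn p)).symm
    _ = ∑' t : ℕ, γ ^ t * ∑ p : S × A, dDist P pol ρ0 t p * f p := by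
        refine tsum_congr fun t => ?_
        rw [Finset.mul_sum]
        exact Finset.sum_congr rfl fun p _ => by ring

lemma reward_bound (P : S → A → PMF S) (pol : S → PMF A) (ρ0 : PMF S) (t : ℕ)
    (r : S → A → ℝ) (rmax : ℝ) (hr : ∀ s a, |r s a| ≤ rmax) :
    |∑ p : S × A, dDist P pol ρ0 t p * r p.1 p.2| ≤ rmax := by
  calc |∑ p : S × A, dDist P pol ρ0 t p * r p.1 p.2|
      ≤ ∑ p : S × A, |dDist P pol ρ0 t p * r p.1 p.2| := Finset.abs_sum_le_sum_abs _ _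
    _ ≤ ∑ p : S × A, dDist P pol ρ0 t p * rmax := by
        refine Finset.sum_le_sum fun p _ => ?_
        rw [abs_mul, abs_of_nonneg (dDist_nonneg P pol ρ0 t p)]
        exact mul_le_mul_of_nonneg_left (hr p.1 p.2) (dDist_nonneg P pol ρ0 t p)
    _ = rmax := by rw [← Finset.sum_mul, dDist_sum_one, one_mul]

lemma deltaSeq_le_two (P1 P2 : S → A → PMF S) (π1 π2 : S → PMF A) (ρ0 : PMF S) (t : ℕ) :
    ∑ q : S × A, |dDist P1 π1 ρ0 t q - dDist P2 π2 ρ0 t q| ≤ 2 := by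
  calc ∑ q : S × A, |dDist P1 π1 ρ0 t q - dDist P2 π2 ρ0 t q|
      ≤ ∑ q : S × A, (dDist P1 π1 ρ0 t q + dDist P2 π2 ρ0 t q) := by
        refine Finset.sum_le_sum fun q _ => ?_
        calc |dDist P1 π1 ρ0 t q - dDist P2 π2 ρ0 t q|
            ≤ |dDist P1 π1 ρ0 t q| + |dDist P2 π2 ρ0 t q| := abs_sub _ _
          _ = dDist P1 π1 ρ0 t q + dDist P2 π2 ρ0 t q := by
              rw [abs_of_nonneg (dDist_nonneg _ _ _ _ _), abs_of_nonneg (dDist_nonneg _ _ _ _ _)]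
    _ = 2 := by rw [Finset.sum_add_distrib, dDist_sum_one, dDist_sum_one]; norm_num

lemma stateOcc_eq (P : S → A → PMF S) (pol : S → PMF A) (ρ0 : PMF S)
    {γ : ℝ} (hγ0 : 0 ≤ γ) (hγ1 : γ < 1) (s : S) :
    stateOcc P pol ρ0 γ s = (1 - γ) * ∑' t : ℕ, γ ^ t * ∑ a : A, dDist P pol ρ0 t (s, a) := by
  unfold stateOcc occ
  rw [← Finset.mul_sum, ← Summable.tsum_finsetSum (fun a _ => summable_aux hγ0 hγ1 1
    (fun t => dDist_nonneg P pol ρ0 t (s, a)) (fun t => dDist_le_one P pol ρ0 t (s, a)))]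
  congr 1
  exact tsum_congr fun t => (Finset.mul_sum _ _ _).symm

end

/-- cross-domain cross-policy bound, corrected term (a) of the offline
bound: for kernels `P_src, P_tar` and policies `pol_D, pol`,
`J[P_tar](pol) − J[P_src](pol_D) ≥ −(2·r_max/(1−γ)²) Σ_s ν[P_src,pol_D](s)·D_TV(pol_D(s), pol(s))
 − (2γ·r_max/(1−γ)²) Σ_{(s,a)} ρ[P_src,pol_D](s,a)·D_TV(P_src(s,a), P_tar(s,a))`. -/
theorem cross_domain_cross_policy_bound
    {S A : Type*} [Fintype S] [Fintype A] [Nonempty S] [Nonempty A]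
    (Psrc Ptar : S → A → PMF S) (polD pol : S → PMF A) (ρ0 : PMF S)
    (r : S → A → ℝ) (rmax : ℝ) (hrmax : 0 ≤ rmax) (hr : ∀ s a, |r s a| ≤ rmax)
    (γ : ℝ) (hγ0 : 0 ≤ γ) (hγ1 : γ < 1) :
    Jret Ptar pol ρ0 r γ - Jret Psrc polD ρ0 r γ ≥
      -(2 * rmax / (1 - γ) ^ 2) *
        (∑ s : S, stateOcc Psrc polD ρ0 γ s * dTV (polD s) (pol s))
      - (2 * γ * rmax / (1 - γ) ^ 2) *
        ∑ p : S × A, occ Psrc polD ρ0 γ p * dTV (Psrc p.1 p.2) (Ptar p.1 p.2) := by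
  have h1γ : (0:ℝ) < 1 - γ := by linarith
  -- sequences
  set δ : ℕ → ℝ := fun t => ∑ q : S × A, |dDist Ptar pol ρ0 t q - dDist Psrc polD ρ0 t q|
    with hδdef
  set Ap : ℕ → ℝ := fun t =>
    ∑ s : S, (∑ a : A, dDist Psrc polD ρ0 t (s, a)) * dTV (polD s) (pol s) with hApdef
  set Bp : ℕ → ℝ := fun t =>
    ∑ p : S × A, dDist Psrc polD ρ0 t p * dTV (Psrc p.1 p.2) (Ptar p.1 p.2) with hBpdef
  -- bounds on sequences
  have hδ0 : ∀ t, 0 ≤ δ t := fun t => Finset.sum_nonneg fun q _ => abs_nonneg _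
  have hδ2 : ∀ t, δ t ≤ 2 := fun t => deltaSeq_le_two Ptar Psrc pol polD ρ0 t
  have hA0 : ∀ t, 0 ≤ Ap t := fun t => Finset.sum_nonneg fun s _ =>
    mul_nonneg (dDist_marg_nonneg _ _ _ _ _) (dTV_nonneg _ _)
  have hA1 : ∀ t, Ap t ≤ 1 := by
    intro t
    calc Ap t ≤ ∑ s : S, (∑ a : A, dDist Psrc polD ρ0 t (s, a)) * 1 :=
          Finset.sum_le_sum fun s _ => mul_le_mul_of_nonneg_left (dTV_le_one _ _)
            (dDist_marg_nonneg _ _ _ _ _)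
      _ = 1 := by simp_rw [mul_one]; exact dDist_marg_sum_one _ _ _ _
  have hB0 : ∀ t, 0 ≤ Bp t := fun t => Finset.sum_nonneg fun p _ =>
    mul_nonneg (dDist_nonneg _ _ _ _ _) (dTV_nonneg _ _)
  have hB1 : ∀ t, Bp t ≤ 1 := by
    intro t
    calc Bp t ≤ ∑ p : S × A, dDist Psrc polD ρ0 t p * 1 :=
          Finset.sum_le_sum fun p _ => mul_le_mul_of_nonneg_left (dTV_le_one _ _)
            (dDist_nonneg _ _ _ _ _)
      _ = 1 := by simp_rw [mul_one]; exact dDist_sum_one _ _ _ _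
  have hsδ := summable_aux hγ0 hγ1 2 hδ0 hδ2
  -- recursion bound
  have key : (1 - γ) * ∑' t : ℕ, γ ^ t * δ t ≤
      2 * ∑' t : ℕ, γ ^ t * Ap t + 2 * γ * ∑' t : ℕ, γ ^ t * Bp t := by
    refine abstract_rec hγ0 hγ1 hδ0 hδ2 hA0 hA1 hB0 hB1 ?_ ?_
    · exact le_of_eq (delta_zero Ptar Psrc pol polD ρ0)
    · intro t
      have h := delta_rec Ptar Psrc pol polD ρ0 t
      simp only [hδdef, hApdef, hBpdef]
      linarith [h]
  -- occupancy identities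
  have hA : ∑ s : S, stateOcc Psrc polD ρ0 γ s * dTV (polD s) (pol s)
      = (1 - γ) * ∑' t : ℕ, γ ^ t * Ap t := by
    simp_rw [stateOcc_eq Psrc polD ρ0 hγ0 hγ1]
    exact sum_stateOcc_mul Psrc polD ρ0 hγ0 hγ1 (fun s => dTV (polD s) (pol s))
  have hB : ∑ p : S × A, occ Psrc polD ρ0 γ p * dTV (Psrc p.1 p.2) (Ptar p.1 p.2)
      = (1 - γ) * ∑' t : ℕ, γ ^ t * Bp t := by
    exact sum_occ_mul Psrc polD ρ0 hγ0 hγ1 (fun p => dTV (Psrc p.1 p.2) (Ptar p.1 p.2))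
  -- J difference lower bound
  have hs1 : Summable (fun t : ℕ => γ ^ t * ∑ p : S × A, dDist Ptar pol ρ0 t p * r p.1 p.2) :=
    summable_aux' hγ0 hγ1 rmax (fun t => reward_bound Ptar pol ρ0 t r rmax hr)
  have hs2 : Summable (fun t : ℕ => γ ^ t * ∑ p : S × A, dDist Psrc polD ρ0 t p * r p.1 p.2) :=
    summable_aux' hγ0 hγ1 rmax (fun t => reward_bound Psrc polD ρ0 t r rmax hr)
  have hJeq : Jret Ptar pol ρ0 r γ - Jret Psrc polD ρ0 r γ =
      ∑' t : ℕ, (γ ^ t * ∑ p : S × A, dDist Ptar pol ρ0 t p * r p.1 p.2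
        - γ ^ t * ∑ p : S × A, dDist Psrc polD ρ0 t p * r p.1 p.2) :=
    (Summable.tsum_sub hs1 hs2).symm
  have hpt : ∀ t : ℕ, -(rmax * (γ ^ t * δ t)) ≤
      γ ^ t * ∑ p : S × A, dDist Ptar pol ρ0 t p * r p.1 p.2
        - γ ^ t * ∑ p : S × A, dDist Psrc polD ρ0 t p * r p.1 p.2 := by
    intro t
    have hd : |(∑ p : S × A, dDist Ptar pol ρ0 t p * r p.1 p.2)
        - ∑ p : S × A, dDist Psrc polD ρ0 t p * r p.1 p.2| ≤ rmax * δ t := by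
      rw [← Finset.sum_sub_distrib]
      calc |∑ p : S × A, (dDist Ptar pol ρ0 t p * r p.1 p.2
              - dDist Psrc polD ρ0 t p * r p.1 p.2)|
          ≤ ∑ p : S × A, |dDist Ptar pol ρ0 t p * r p.1 p.2
              - dDist Psrc polD ρ0 t p * r p.1 p.2| := Finset.abs_sum_le_sum_abs _ _
        _ ≤ ∑ p : S × A, |dDist Ptar pol ρ0 t p - dDist Psrc polD ρ0 t p| * rmax := by
            refine Finset.sum_le_sum fun p _ => ?_
            rw [← sub_mul, abs_mul]
            exact mul_le_mul_of_nonneg_left (hr p.1 p.2) (abs_nonneg _)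
        _ = rmax * δ t := by rw [← Finset.sum_mul, hδdef]; ring
      
    have h2 := neg_abs_le ((∑ p : S × A, dDist Ptar pol ρ0 t p * r p.1 p.2)
        - ∑ p : S × A, dDist Psrc polD ρ0 t p * r p.1 p.2)
    have h3 : -(rmax * δ t) ≤ (∑ p : S × A, dDist Ptar pol ρ0 t p * r p.1 p.2)
        - ∑ p : S × A, dDist Psrc polD ρ0 t p * r p.1 p.2 := by linarith
    have h4 := mul_le_mul_of_nonneg_left h3 (pow_nonneg hγ0 t)
    calc -(rmax * (γ ^ t * δ t)) = γ ^ t * (-(rmax * δ t)) := by ring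
      _ ≤ γ ^ t * ((∑ p : S × A, dDist Ptar pol ρ0 t p * r p.1 p.2)
          - ∑ p : S × A, dDist Psrc polD ρ0 t p * r p.1 p.2) := h4
      _ = _ := by ring
  have hJ : Jret Ptar pol ρ0 r γ - Jret Psrc polD ρ0 r γ ≥
      -(rmax * ∑' t : ℕ, γ ^ t * δ t) := by
    rw [hJeq]
    have := Summable.tsum_le_tsum hpt ((hsδ.mul_left rmax).neg) (hs1.sub hs2)
    rwa [tsum_neg, tsum_mul_left] at this
  -- combine
  rw [hA, hB]
  set D := ∑' t : ℕ, γ ^ t * δ t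
  set Aa := ∑' t : ℕ, γ ^ t * Ap t
  set Bb := ∑' t : ℕ, γ ^ t * Bp t
  have hrw : -(2 * rmax / (1 - γ) ^ 2) * ((1 - γ) * Aa)
      - (2 * γ * rmax / (1 - γ) ^ 2) * ((1 - γ) * Bb)
      = -(rmax * ((2 * Aa + 2 * γ * Bb) / (1 - γ))) := by
    field_simp
    ring
  rw [hrw]
  have hDle : D ≤ (2 * Aa + 2 * γ * Bb) / (1 - γ) :=
    (le_div_iff₀ h1γ).2 (by linarith [key])
  have := mul_le_mul_of_nonneg_left hDle hrmax
  linarith [hJ]
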